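/- Let k, p, q and r be positive integers. Let S and T be balanced rooted binary phylogenetic trees on p·2^k and q·2^k leaves respectively, where S consists of p pendant subtrees S_1, ..., S_p each of size 2^k and T consists of q pendant subtrees T_1, ..., T_q each of size 2^k. Suppose that (i) for all i, j, the label sets of S_i and T_j intersect in exactly r elements, and (ii) for all i, j, the restrictions S_i|(L(S_i) ∩ L(T_j)) and T_j|(L(S_i) ∩ L(T_j)) form a pair of anti-caterpillars. Then mast(S, T) ≤ 2 · max{p, q}. -/

import Mathlib

/-!
Rooted binary phylogenetic trees, restrictions, agreement subtrees, and
maximum agreement subtrees (MASTs), following Martin–Thatte style definitions.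
-/

namespace PhyloMAST

/-- A rooted binary tree with leaves labelled by `α`. -/
inductive PTree (α : Type) : Type
  | leaf : α → PTree α
  | node : PTree α → PTree α → PTree α

namespace PTree

variable {α β : Type}

/-- The list of leaf labels, read left to right. -/
def leafList : PTree α → List α
  | leaf x => [x]
  | node l r => leafList l ++ leafList r

/-- The set of leaf labels. -/
def leaves [DecidableEq α] (t : PTree α) : Finset α := t.leafList.toFinset

/-- The height: number of edges on a longest root-to-leaf path. -/
def height : PTree α → ℕ
  | leaf _ => 0
  | node l r => max (height l) (height r) + 1

/-- `t` is a genuine phylogenetic tree: its leaf labels are pairwise distinct. -/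
def Phylo (t : PTree α) : Prop := t.leafList.Nodup

/-- `t` is balanced: its number of leaves is `2 ^ height`. -/
def Balanced (t : PTree α) : Prop := t.leafList.length = 2 ^ t.height

/-- The restriction `t|Y`: the minimal subtree connecting the leaves in `Y`
with all non-root degree-two vertices suppressed; `none` if no leaf of `t`
lies in `Y`. -/
def restrict [DecidableEq α] : PTree α → Finset α → Option (PTree α)
  | leaf x, Y => if x ∈ Y then some (leaf x) else none
  | node l r, Y =>
    match restrict l Y, restrict r Y with
    | some l', some r' => some (node l' r')
    | some l', none => some l'
    | none, some r' => some r'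
    | none, none => none

/-- Isomorphism of leaf-labelled rooted binary trees (children are unordered). -/
inductive Iso : PTree α → PTree α → Prop
  | leaf (x : α) : Iso (leaf x) (leaf x)
  | node {a b c d : PTree α} : Iso a c → Iso b d → Iso (node a b) (node c d)
  | swap {a b c d : PTree α} : Iso a d → Iso b c → Iso (node a b) (node c d)

/-- `Agree S T Y`: the set `Y` induces an agreement subtree of `S` and `T`. -/
def Agree [DecidableEq α] (S T : PTree α) (Y : Finset α) : Prop :=
  Y ⊆ S.leaves ∩ T.leaves ∧
    ∃ S' T', S.restrict Y = some S' ∧ T.restrict Y = some T' ∧ Iso S' T'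

/-- `mast S T`: the maximum size of an agreement subtree of `S` and `T`. -/
noncomputable def mast [DecidableEq α] (S T : PTree α) : ℕ :=
  sSup {k | ∃ Y : Finset α, Agree S T Y ∧ Y.card = k}

/-- The caterpillar tree `(l₁, l₂, …, lₙ)` built from a (nonempty) list:
`l₁` and `l₂` share a parent, and each later leaf hangs off the path to the
root, which is adjacent to the last leaf. -/
def catList [Inhabited α] : List α → PTree α
  | [] => leaf default
  | x :: xs => xs.foldl (fun t y => node t (leaf y)) (leaf x)

/-- `T` embeds the phylogenetic tree `T'`: the label set of `T'` is contained
in that of `T`, and the restriction of `T` to it is isomorphic to `T'`. -/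
def Embeds [DecidableEq α] (T T' : PTree α) : Prop :=
  T'.leaves ⊆ T.leaves ∧ ∃ R, T.restrict T'.leaves = some R ∧ Iso R T'

/-- `Subtree s t`: `s` is a (pendant) subtree of `t` (possibly `t` itself). -/
inductive Subtree : PTree α → PTree α → Prop
  | refl (t : PTree α) : Subtree t t
  | left {s l r : PTree α} : Subtree s l → Subtree s (node l r)
  | right {s l r : PTree α} : Subtree s r → Subtree s (node l r)

/-- The pendant subtrees rooted at depth `k`, read left to right. -/
def subtreesAt : ℕ → PTree α → List (PTree α)
  | 0, t => [t]
  | _ + 1, leaf x => [leaf x]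
  | k + 1, node l r => subtreesAt k l ++ subtreesAt k r

/-- Two trees have the same unlabelled shape (a labelling of the second
yields the first). -/
inductive SameShape : PTree α → PTree β → Prop
  | leaf (x : α) (y : β) : SameShape (leaf x) (leaf y)
  | node {a b : PTree α} {c d : PTree β} :
      SameShape a c → SameShape b d → SameShape (node a b) (node c d)

end PTree

end PhyloMAST

/-!
Write `p = 2 ^ (height S - k)`, `q = 2 ^ (height T - k)` and compare perfect pendant subtrees of
heights `a, b ≥ k` by induction on `a + b`, proving `mast ≤ 2 * 2 ^ (max a b - k)`.
At height `k` both are blocks, and an agreement set of two blocks has at most two leaves: on three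
leaves the anti-caterpillars `(a, …, z)` and `(z, …, a)` have different root splits. Above, an
agreement set either lies below one child at a root or splits along both root splits compatibly
(the Steel–Warnow recursion), so `mast ≤ mast S₁ T₁ + mast S₂ T₂` up to swapping `T₁, T₂`, which
doubles the bound; when the heights differ it suffices to split the taller tree.
-/

namespace PhyloMAST

theorem eq_two_pow_sub_of_mul_two_pow_eq {p k n : ℕ} (h : p * 2 ^ k = 2 ^ n) :
    k ≤ n ∧ p = 2 ^ (n - k) := by
  have hkn : k ≤ n := (Nat.pow_dvd_pow_iff_le_right one_lt_two).mp (h ▸ Dvd.intro_left p rfl)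
  refine ⟨hkn, Nat.eq_of_mul_eq_mul_right (pow_pos two_pos k) ?_⟩
  rw [h, ← pow_add, Nat.sub_add_cancel hkn]

namespace PTree

variable {α : Type}

theorem leafList_ne_nil : ∀ t : PTree α, t.leafList ≠ []
  | leaf _ => List.cons_ne_nil _ _
  | node l _ => by simp [leafList, leafList_ne_nil l]

theorem Subtree.trans {a b c : PTree α} (hab : Subtree a b) (hbc : Subtree b c) :
    Subtree a c := by
  induction hbc with
  | refl => exact hab
  | left _ ih => exact ih.left
  | right _ ih => exact ih.right

theorem Subtree.sublist {s t : PTree α} (h : Subtree s t) : s.leafList.Sublist t.leafList := by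
  induction h with
  | refl => exact List.Sublist.refl _
  | left _ ih => exact ih.trans (List.sublist_append_left _ _)
  | right _ ih => exact ih.trans (List.sublist_append_right _ _)

theorem Subtree.length_lt_of_ne {a b : PTree α} (h : Subtree a b) (hne : a ≠ b) :
    a.leafList.length < b.leafList.length := by
  cases h with
  | refl => exact absurd rfl hne
  | @left l r h =>
    have := List.length_pos_iff.mpr (leafList_ne_nil r)
    have := h.sublist.length_le
    simp only [leafList, List.length_append]
    omega
  | @right l r h =>
    have := List.length_pos_iff.mpr (leafList_ne_nil l)
    have := h.sublist.length_le
    simp only [leafList, List.length_append]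
    omega

theorem Phylo.of_subtree {s t : PTree α} (ht : Phylo t) (h : Subtree s t) : Phylo s :=
  ht.sublist h.sublist

theorem Phylo.left {l r : PTree α} (h : Phylo (node l r)) : Phylo l :=
  List.Nodup.of_append_left h

theorem Phylo.right {l r : PTree α} (h : Phylo (node l r)) : Phylo r :=
  List.Nodup.of_append_right h

theorem Phylo.disjoint {l r : PTree α} (h : Phylo (node l r)) :
    ∀ x ∈ l.leafList, x ∉ r.leafList :=
  fun _ hl hr => (List.nodup_append.mp h).2.2 _ hl _ hr rfl

theorem Subtree.nested {t a b : PTree α} (ht : Phylo t) (ha : Subtree a t) (hb : Subtree b t)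
    {x : α} (hxa : x ∈ a.leafList) (hxb : x ∈ b.leafList) : Subtree a b ∨ Subtree b a := by
  induction t with
  | leaf y => cases ha; cases hb; exact Or.inl (Subtree.refl _)
  | node l r ihl ihr =>
    cases ha with
    | refl => exact Or.inr hb
    | left ha =>
      cases hb with
      | refl => exact Or.inl ha.left
      | left hb => exact ihl ht.left ha hb
      | right hb => exact absurd (hb.sublist.mem hxb) (ht.disjoint x (ha.sublist.mem hxa))
    | right ha =>
      cases hb with
      | refl => exact Or.inl ha.right
      | left hb => exact absurd (ha.sublist.mem hxa) (ht.disjoint x (hb.sublist.mem hxb))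
      | right hb => exact ihr ht.right ha hb

theorem Subtree.eq_of_length_eq {t a b : PTree α} (ht : Phylo t) (ha : Subtree a t)
    (hb : Subtree b t) {x : α} (hxa : x ∈ a.leafList) (hxb : x ∈ b.leafList)
    (hlen : a.leafList.length = b.leafList.length) : a = b := by
  by_contra hne
  rcases Subtree.nested ht ha hb hxa hxb with h | h
  · exact (h.length_lt_of_ne hne).ne hlen
  · exact (h.length_lt_of_ne (Ne.symm hne)).ne hlen.symm

theorem Iso.perm {a b : PTree α} (h : Iso a b) : a.leafList.Perm b.leafList := by
  induction h with
  | leaf => exact List.Perm.refl _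
  | node _ _ ih₁ ih₂ => exact ih₁.append ih₂
  | swap _ _ ih₁ ih₂ => exact (ih₁.append ih₂).trans List.perm_append_comm

theorem Iso.symm {a b : PTree α} (h : Iso a b) : Iso b a := by
  induction h with
  | leaf x => exact Iso.leaf x
  | node _ _ ih₁ ih₂ => exact Iso.node ih₁ ih₂
  | swap _ _ ih₁ ih₂ => exact Iso.swap ih₂ ih₁

theorem Iso.trans {a b c : PTree α} (hab : Iso a b) (hbc : Iso b c) : Iso a c := by
  induction hab generalizing c with
  | leaf => exact hbc
  | node _ _ ih₁ ih₂ =>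
    cases hbc with
    | node h₁ h₂ => exact Iso.node (ih₁ h₁) (ih₂ h₂)
    | swap h₁ h₂ => exact Iso.swap (ih₁ h₁) (ih₂ h₂)
  | swap _ _ ih₁ ih₂ =>
    cases hbc with
    | node h₁ h₂ => exact Iso.swap (ih₁ h₂) (ih₂ h₁)
    | swap h₁ h₂ => exact Iso.node (ih₁ h₂) (ih₂ h₁)

inductive Perfect : ℕ → PTree α → Prop
  | leaf (x : α) : Perfect 0 (leaf x)
  | node {n : ℕ} {l r : PTree α} : Perfect n l → Perfect n r → Perfect (n + 1) (node l r)

theorem Perfect.length {n : ℕ} {t : PTree α} (h : Perfect n t) : t.leafList.length = 2 ^ n := by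
  induction h with
  | leaf => rfl
  | node _ _ ih₁ ih₂ => simp [leafList, ih₁, ih₂, pow_succ, mul_two]

theorem length_le_two_pow_height (t : PTree α) : t.leafList.length ≤ 2 ^ t.height := by
  induction t with
  | leaf => simp [leafList, height]
  | node l r ihl ihr =>
    have hl := Nat.pow_le_pow_right two_pos (le_max_left l.height r.height)
    have hr := Nat.pow_le_pow_right two_pos (le_max_right l.height r.height)
    simp only [leafList, height, List.length_append, pow_succ]
    omega

theorem Balanced.perfect {t : PTree α} (h : Balanced t) : Perfect t.height t := by
  induction t with
  | leaf x => exact .leaf x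
  | node l r ihl ihr =>
    have hl := length_le_two_pow_height l
    have hr := length_le_two_pow_height r
    have hl' := Nat.pow_le_pow_right two_pos (le_max_left l.height r.height)
    have hr' := Nat.pow_le_pow_right two_pos (le_max_right l.height r.height)
    simp only [Balanced, leafList, height, List.length_append, pow_succ] at h
    have hlh : l.height = max l.height r.height :=
      Nat.pow_right_injective le_rfl (show 2 ^ l.height = 2 ^ max l.height r.height by omega)
    have hrh : r.height = max l.height r.height :=
      Nat.pow_right_injective le_rfl (show 2 ^ r.height = 2 ^ max l.height r.height by omega)
    have hPl := ihl (by unfold Balanced; omega)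
    have hPr := ihr (by unfold Balanced; omega)
    exact .node (hlh ▸ hPl) (hrh ▸ hPr)

section
variable [Inhabited α]

theorem catList_append_singleton {l : List α} (hl : l ≠ []) (z : α) :
    catList (l ++ [z]) = node (catList l) (leaf z) := by
  obtain ⟨x, xs, rfl⟩ := List.exists_cons_of_ne_nil hl
  simp [catList, List.foldl_append]

theorem leafList_catList {l : List α} (hl : l ≠ []) : (catList l).leafList = l := by
  induction l using List.reverseRecOn with
  | nil => exact absurd rfl hl
  | append_singleton l z ih =>
    rcases eq_or_ne l [] with rfl | hl'
    · rfl
    · rw [catList_append_singleton hl', leafList, ih hl', leafList]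

/-- The root of `(a, …, z)` splits off `z`, the root of `(z, …, a)` splits off `a`. -/
theorem not_iso_catList_reverse {l : List α} (hl : l.Nodup) (hlen : 3 ≤ l.length) :
    ¬ Iso (catList l) (catList l.reverse) := by
  obtain ⟨a, m, rfl⟩ :=
    List.exists_cons_of_ne_nil (List.ne_nil_of_length_pos (l := l) (by omega))
  obtain ⟨mid, z, rfl⟩ := (List.eq_nil_or_concat' m).resolve_left (by rintro rfl; simp at hlen)
  have hmid : mid ≠ [] := by rintro rfl; simp at hlen
  have hrev : (a :: (mid ++ [z])).reverse = z :: mid.reverse ++ [a] := by simp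
  rw [hrev, ← List.cons_append, catList_append_singleton (List.cons_ne_nil _ _),
    catList_append_singleton (List.cons_ne_nil _ _)]
  intro hiso
  cases hiso with
  | node _ h =>
    cases h
    simp at hl
  | swap h _ =>
    have := h.perm.length_eq
    rw [leafList_catList (List.cons_ne_nil _ _)] at this
    simp [leafList, hmid] at this

end

variable [DecidableEq α]

theorem mem_leaves {x : α} {t : PTree α} : x ∈ t.leaves ↔ x ∈ t.leafList :=
  List.mem_toFinset

theorem Phylo.card_leaves {t : PTree α} (h : Phylo t) : t.leaves.card = t.leafList.length :=
  List.toFinset_card_of_nodup h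

theorem restrict_node_of_left_eq_none {l r : PTree α} {Y : Finset α}
    (h : l.restrict Y = none) : (node l r).restrict Y = r.restrict Y := by
  simp only [restrict, h]
  cases r.restrict Y <;> rfl

theorem restrict_node_of_right_eq_none {l r : PTree α} {Y : Finset α}
    (h : r.restrict Y = none) : (node l r).restrict Y = l.restrict Y := by
  simp only [restrict, h]
  cases l.restrict Y <;> rfl

theorem restrict_leafList (t : PTree α) (Y : Finset α) :
    (t.restrict Y).elim [] leafList = t.leafList.filter (· ∈ Y) := by
  induction t with
  | leaf x => by_cases hx : x ∈ Y <;> simp [restrict, leafList, hx]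
  | node l r ihl ihr =>
    simp only [restrict, leafList, List.filter_append, ← ihl, ← ihr]
    cases l.restrict Y <;> cases r.restrict Y <;> simp [leafList]

theorem leafList_of_restrict_eq_some {t u : PTree α} {Y : Finset α}
    (h : t.restrict Y = some u) : u.leafList = t.leafList.filter (· ∈ Y) := by
  simpa [h] using restrict_leafList t Y

theorem restrict_eq_none_iff {t : PTree α} {Y : Finset α} :
    t.restrict Y = none ↔ ∀ x ∈ t.leafList, x ∉ Y := by
  have h := restrict_leafList t Y
  cases hu : t.restrict Y with
  | none => simpa [hu, eq_comm (a := []), List.filter_eq_nil_iff] using h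
  | some u =>
    simp only [hu, Option.elim_some] at h
    have := leafList_ne_nil u
    rw [h, Ne, List.filter_eq_nil_iff] at this
    simpa using this

theorem restrict_eq_of_subtree {s t : PTree α} (ht : Phylo t) (h : Subtree s t) {Y : Finset α}
    (hY : ∀ x ∈ Y, x ∈ s.leafList) : t.restrict Y = s.restrict Y := by
  induction h with
  | refl => rfl
  | left h ih =>
    rw [restrict_node_of_right_eq_none, ih ht.left]
    exact restrict_eq_none_iff.mpr fun x hx hxY =>
      ht.disjoint x (h.sublist.mem (hY x hxY)) hx
  | right h ih =>
    rw [restrict_node_of_left_eq_none, ih ht.right]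
    exact restrict_eq_none_iff.mpr fun x hx hxY =>
      ht.disjoint x hx (h.sublist.mem (hY x hxY))

theorem restrict_eq_none_of_subset {t : PTree α} {Y Z : Finset α} (hYZ : Y ⊆ Z)
    (h : t.restrict Z = none) : t.restrict Y = none :=
  restrict_eq_none_iff.mpr fun x hx hxY => restrict_eq_none_iff.mp h x hx (hYZ hxY)

theorem restrict_restrict {t u : PTree α} {Y Z : Finset α} (hYZ : Y ⊆ Z)
    (h : t.restrict Z = some u) : u.restrict Y = t.restrict Y := by
  induction t generalizing u with
  | leaf x =>
    by_cases hx : x ∈ Z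
    · simp only [restrict, hx, if_true, Option.some.injEq] at h
      subst h; rfl
    · simp [restrict, hx] at h
  | node l r ihl ihr =>
    simp only [restrict] at h
    cases hl : l.restrict Z <;> cases hr : r.restrict Z <;>
      simp only [hl, hr, Option.some.injEq, reduceCtorEq] at h <;> subst h
    · rw [restrict_node_of_left_eq_none (restrict_eq_none_of_subset hYZ hl), ihr hr]
    · rw [restrict_node_of_right_eq_none (restrict_eq_none_of_subset hYZ hr), ihl hl]
    · simp only [restrict, ihl hl, ihr hr]

theorem Iso.restrict {a b : PTree α} (h : Iso a b) (Y : Finset α) :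
    Option.Rel Iso (a.restrict Y) (b.restrict Y) := by
  induction h with
  | leaf x => by_cases hx : x ∈ Y <;> simp [PTree.restrict, hx, Iso.leaf]
  | @node a b c d _ _ ih₁ ih₂ =>
    simp only [PTree.restrict]
    generalize a.restrict Y = oa, c.restrict Y = oc at ih₁ ⊢
    generalize b.restrict Y = ob, d.restrict Y = od at ih₂ ⊢
    rcases ih₁ with h₁ | _ <;> rcases ih₂ with h₂ | _
    exacts [.some (.node h₁ h₂), .some h₁, .some h₂, .none]
  | @swap a b c d _ _ ih₁ ih₂ =>
    simp only [PTree.restrict]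
    generalize a.restrict Y = oa, d.restrict Y = od at ih₁ ⊢
    generalize b.restrict Y = ob, c.restrict Y = oc at ih₂ ⊢
    rcases ih₁ with h₁ | _ <;> rcases ih₂ with h₂ | _
    exacts [.some (.swap h₁ h₂), .some h₁, .some h₂, .none]

theorem exists_restrict_eq_some {t : PTree α} {Y : Finset α} {x : α} (hx : x ∈ t.leafList)
    (hxY : x ∈ Y) : ∃ u, t.restrict Y = some u :=
  Option.ne_none_iff_exists'.mp fun h => restrict_eq_none_iff.mp h x hx hxY

theorem Agree.symm {S T : PTree α} {Y : Finset α} (h : Agree S T Y) : Agree T S Y := by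
  obtain ⟨hY, S', T', hS', hT', hiso⟩ := h
  exact ⟨Finset.inter_comm S.leaves T.leaves ▸ hY, T', S', hT', hS', hiso.symm⟩

theorem Agree.mono {S T : PTree α} {Y Z : Finset α} (h : Agree S T Y) (hZY : Z ⊆ Y)
    (hZ : Z.Nonempty) : Agree S T Z := by
  obtain ⟨hY, S', T', hS', hT', hiso⟩ := h
  obtain ⟨x, hx⟩ := hZ
  have hxS := mem_leaves.mp (Finset.mem_inter.mp (hY (hZY hx))).1
  refine ⟨hZY.trans hY, ?_⟩
  have hrel := hiso.restrict Z
  rw [restrict_restrict hZY hS', restrict_restrict hZY hT'] at hrel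
  obtain ⟨S'', hSZ⟩ := exists_restrict_eq_some hxS hx
  rw [hSZ] at hrel
  cases hTZ : T.restrict Z with
  | none => simp [hTZ] at hrel
  | some T'' => exact ⟨S'', T'', hSZ, rfl, by simpa [hTZ] using hrel⟩

theorem Agree.of_subtree {S T s : PTree α} {Y : Finset α} (h : Agree S T Y) (hS : Phylo S)
    (hs : Subtree s S) (hYs : Y ⊆ s.leaves) : Agree s T Y := by
  obtain ⟨hY, S', T', hS', hT', hiso⟩ := h
  refine ⟨fun x hx => Finset.mem_inter.mpr ⟨hYs hx, (Finset.mem_inter.mp (hY hx)).2⟩,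
    S', T', ?_, hT', hiso⟩
  rwa [← restrict_eq_of_subtree hS hs fun x hx => mem_leaves.mp (hYs hx)]

theorem card_le_mast {S T : PTree α} {Y : Finset α} (h : Agree S T Y) : Y.card ≤ mast S T := by
  refine le_csSup ⟨S.leaves.card, ?_⟩ ⟨Y, h, rfl⟩
  rintro _ ⟨Z, hZ, rfl⟩
  exact Finset.card_le_card (hZ.1.trans Finset.inter_subset_left)

theorem mast_le {S T : PTree α} {n : ℕ} (h : ∀ Y, Agree S T Y → Y.card ≤ n) :
    mast S T ≤ n :=
  csSup_le' fun _ ⟨Y, hY, hcard⟩ => hcard ▸ h Y hY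

theorem mast_comm (S T : PTree α) : mast S T = mast T S :=
  le_antisymm (mast_le fun _ h => card_le_mast h.symm) (mast_le fun _ h => card_le_mast h.symm)

theorem card_le_mast_of_subtree {S T s t : PTree α} {Y Z : Finset α} (hS : Phylo S)
    (hT : Phylo T) (hs : Subtree s S) (ht : Subtree t T) (h : Agree S T Y) (hZY : Z ⊆ Y)
    (hZs : Z ⊆ s.leaves) (hZt : Z ⊆ t.leaves) : Z.card ≤ mast s t := by
  rcases Z.eq_empty_or_nonempty with rfl | hZ
  · exact Nat.zero_le _
  exact card_le_mast (((h.mono hZY hZ).of_subtree hS hs hZs).symm.of_subtree hT ht hZt).symm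

theorem leaves_node (l r : PTree α) : (node l r).leaves = l.leaves ∪ r.leaves := by
  simp [leaves, leafList, List.toFinset_append]

theorem card_le_card_inter_add {l r : PTree α} {Y : Finset α} (hY : Y ⊆ (node l r).leaves) :
    Y.card ≤ (Y ∩ l.leaves).card + (Y ∩ r.leaves).card := by
  refine (Finset.card_le_card ?_).trans (Finset.card_union_le _ _)
  rw [← Finset.inter_union_distrib_left, ← leaves_node]
  exact Finset.subset_inter subset_rfl hY

theorem exists_restrict_right_eq_some {l r : PTree α} {Y : Finset α}
    (hY : Y ⊆ (node l r).leaves) (hl : ¬ Y ⊆ l.leaves) : ∃ u, r.restrict Y = some u := by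
  obtain ⟨x, hxY, hxl⟩ := Finset.not_subset.mp hl
  have hx := hY hxY
  rw [leaves_node, Finset.mem_union] at hx
  exact exists_restrict_eq_some (mem_leaves.mp (hx.resolve_left hxl)) hxY

theorem exists_restrict_left_eq_some {l r : PTree α} {Y : Finset α}
    (hY : Y ⊆ (node l r).leaves) (hr : ¬ Y ⊆ r.leaves) : ∃ u, l.restrict Y = some u := by
  obtain ⟨x, hxY, hxr⟩ := Finset.not_subset.mp hr
  have hx := hY hxY
  rw [leaves_node, Finset.mem_union] at hx
  exact exists_restrict_eq_some (mem_leaves.mp (hx.resolve_right hxr)) hxY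

theorem inter_leaves_subset_of_iso {s t A B : PTree α} {Y : Finset α}
    (hA : s.restrict Y = some A) (hB : t.restrict Y = some B) (hAB : Iso A B) :
    Y ∩ s.leaves ⊆ t.leaves := by
  intro x hx
  rw [Finset.mem_inter, mem_leaves] at hx
  have hxA : x ∈ A.leafList := by simp [leafList_of_restrict_eq_some hA, hx.1, hx.2]
  have hxB := hAB.perm.mem_iff.mp hxA
  rw [leafList_of_restrict_eq_some hB, List.mem_filter] at hxB
  exact mem_leaves.mpr hxB.1

theorem Agree.node_cases {S₁ S₂ T₁ T₂ : PTree α} {Y : Finset α}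
    (h : Agree (node S₁ S₂) (node T₁ T₂) Y) :
    Y ⊆ S₁.leaves ∨ Y ⊆ S₂.leaves ∨ Y ⊆ T₁.leaves ∨ Y ⊆ T₂.leaves ∨
      (Y ∩ S₁.leaves ⊆ T₁.leaves ∧ Y ∩ S₂.leaves ⊆ T₂.leaves) ∨
      (Y ∩ S₁.leaves ⊆ T₂.leaves ∧ Y ∩ S₂.leaves ⊆ T₁.leaves) := by
  obtain ⟨hY, S', T', hS', hT', hiso⟩ := h
  have hYS := hY.trans Finset.inter_subset_left
  have hYT := hY.trans Finset.inter_subset_right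
  by_cases h₁ : Y ⊆ S₁.leaves; · exact Or.inl h₁
  by_cases h₂ : Y ⊆ S₂.leaves; · exact Or.inr (Or.inl h₂)
  by_cases h₃ : Y ⊆ T₁.leaves; · exact Or.inr (Or.inr (Or.inl h₃))
  by_cases h₄ : Y ⊆ T₂.leaves; · exact Or.inr (Or.inr (Or.inr (Or.inl h₄)))
  right; right; right; right
  obtain ⟨A₁, hA₁⟩ := exists_restrict_left_eq_some hYS h₂
  obtain ⟨A₂, hA₂⟩ := exists_restrict_right_eq_some hYS h₁
  obtain ⟨B₁, hB₁⟩ := exists_restrict_left_eq_some hYT h₄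
  obtain ⟨B₂, hB₂⟩ := exists_restrict_right_eq_some hYT h₃
  simp only [restrict, hA₁, hA₂, hB₁, hB₂, Option.some.injEq] at hS' hT'
  subst hS' hT'
  cases hiso with
  | node h₁ h₂ =>
    exact Or.inl
      ⟨inter_leaves_subset_of_iso hA₁ hB₁ h₁, inter_leaves_subset_of_iso hA₂ hB₂ h₂⟩
  | swap h₁ h₂ =>
    exact Or.inr
      ⟨inter_leaves_subset_of_iso hA₁ hB₂ h₁, inter_leaves_subset_of_iso hA₂ hB₁ h₂⟩

theorem mast_node_le_add {S₁ S₂ T : PTree α} (hS : Phylo (node S₁ S₂)) (hT : Phylo T) :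
    mast (node S₁ S₂) T ≤ mast S₁ T + mast S₂ T := by
  refine mast_le fun Y h => ?_
  have hYT := h.1.trans Finset.inter_subset_right
  refine (card_le_card_inter_add (h.1.trans Finset.inter_subset_left)).trans ?_
  exact add_le_add
    (card_le_mast_of_subtree hS hT (.left (.refl _)) (.refl _) h Finset.inter_subset_left
      Finset.inter_subset_right (Finset.inter_subset_left.trans hYT))
    (card_le_mast_of_subtree hS hT (.right (.refl _)) (.refl _) h Finset.inter_subset_left
      Finset.inter_subset_right (Finset.inter_subset_left.trans hYT))

theorem mast_le_add_node {S T₁ T₂ : PTree α} (hS : Phylo S) (hT : Phylo (node T₁ T₂)) :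
    mast S (node T₁ T₂) ≤ mast S T₁ + mast S T₂ := by
  simpa only [mast_comm S] using mast_node_le_add hT hS

/-- The upper half of the Steel–Warnow recursion for `mast`. -/
theorem mast_node_node_le {S₁ S₂ T₁ T₂ : PTree α} (hS : Phylo (node S₁ S₂))
    (hT : Phylo (node T₁ T₂)) :
    mast (node S₁ S₂) (node T₁ T₂) ≤
      max (max (mast S₁ T₁ + mast S₂ T₂) (mast S₁ T₂ + mast S₂ T₁))
        (max (max (mast S₁ (node T₁ T₂)) (mast S₂ (node T₁ T₂)))
          (max (mast (node S₁ S₂) T₁) (mast (node S₁ S₂) T₂))) := by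
  refine mast_le fun Y h => ?_
  have hYS := h.1.trans Finset.inter_subset_left
  have hYT := h.1.trans Finset.inter_subset_right
  have hsplit := card_le_card_inter_add hYS
  have bound {s t : PTree α} (hs : Subtree s (node S₁ S₂)) (ht : Subtree t (node T₁ T₂))
      {Z : Finset α} (hZY : Z ⊆ Y) (hZs : Z ⊆ s.leaves) (hZt : Z ⊆ t.leaves) :
      Z.card ≤ mast s t :=
    card_le_mast_of_subtree hS hT hs ht h hZY hZs hZt
  have hS₁ : Subtree S₁ (node S₁ S₂) := .left (.refl _)
  have hS₂ : Subtree S₂ (node S₁ S₂) := .right (.refl _)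
  have hT₁ : Subtree T₁ (node T₁ T₂) := .left (.refl _)
  have hT₂ : Subtree T₂ (node T₁ T₂) := .right (.refl _)
  have hYS₁ : Y ∩ S₁.leaves ⊆ Y := Finset.inter_subset_left
  have hYS₂ : Y ∩ S₂.leaves ⊆ Y := Finset.inter_subset_left
  rcases h.node_cases with h₁ | h₂ | h₃ | h₄ | ⟨h₁, h₂⟩ | ⟨h₁, h₂⟩
  · have := bound hS₁ (.refl _) subset_rfl h₁ hYT; omega
  · have := bound hS₂ (.refl _) subset_rfl h₂ hYT; omega
  · have := bound (.refl _) hT₁ subset_rfl hYS h₃; omega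
  · have := bound (.refl _) hT₂ subset_rfl hYS h₄; omega
  · have := bound hS₁ hT₁ hYS₁ Finset.inter_subset_right h₁
    have := bound hS₂ hT₂ hYS₂ Finset.inter_subset_right h₂
    omega
  · have := bound hS₁ hT₂ hYS₁ Finset.inter_subset_right h₁
    have := bound hS₂ hT₁ hYS₂ Finset.inter_subset_right h₂
    omega

theorem restrict_catList [Inhabited α] {l : List α} {Y : Finset α}
    (h : l.filter (· ∈ Y) ≠ []) :
    (catList l).restrict Y = some (catList (l.filter (· ∈ Y))) := by
  induction l using List.reverseRecOn with
  | nil => exact absurd rfl h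
  | append_singleton l z ih =>
    rcases eq_or_ne l [] with rfl | hl
    · by_cases hz : z ∈ Y <;> simp_all [catList, restrict]
    rw [catList_append_singleton hl]
    by_cases hz : z ∈ Y
    · by_cases hlY : l.filter (· ∈ Y) = []
      · have hnone : (catList l).restrict Y = none :=
          restrict_eq_none_iff.mpr fun x hx hxY => by
            rw [leafList_catList hl] at hx
            simpa [hxY] using List.filter_eq_nil_iff.mp hlY x hx
        rw [restrict_node_of_left_eq_none hnone]
        simp [hlY, hz, restrict, List.filter_append, catList]
      · simp [restrict, ih hlY, hz, List.filter_append, catList_append_singleton hlY]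
    · have hlY : l.filter (· ∈ Y) ≠ [] := by simpa [List.filter_append, hz] using h
      simp [restrict, ih hlY, hz, List.filter_append]

theorem Iso.of_restrict {t A C u v : PTree α} {I Y : Finset α} (hA : t.restrict I = some A)
    (hAC : Iso A C) (hYI : Y ⊆ I) (hu : t.restrict Y = some u) (hv : C.restrict Y = some v) :
    Iso u v := by
  have := hAC.restrict Y
  rwa [restrict_restrict hYI hA, hu, hv, Option.rel_some_some] at this

section
variable [Inhabited α]

def AntiCaterpillars (s t : PTree α) : Prop :=
  ∃ l : List α, l.Nodup ∧ l.toFinset = s.leaves ∩ t.leaves ∧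
    (∃ A, s.restrict (s.leaves ∩ t.leaves) = some A ∧ Iso A (catList l)) ∧
    (∃ B, t.restrict (s.leaves ∩ t.leaves) = some B ∧ Iso B (catList l.reverse))

theorem AntiCaterpillars.mast_le_two {s t : PTree α} (h : AntiCaterpillars s t) :
    mast s t ≤ 2 := by
  obtain ⟨l, hl, hlI, ⟨A, hA, hAl⟩, ⟨B, hB, hBl⟩⟩ := h
  refine mast_le fun Y hY => ?_
  by_contra! hcard
  obtain ⟨hYI, S', T', hS', hT', hiso⟩ := hY
  have hYf : Y ⊆ (l.filter (· ∈ Y)).toFinset := fun x hx => by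
    have := hYI hx
    rw [← hlI, List.mem_toFinset] at this
    simpa [this] using hx
  have hlen : 3 ≤ (l.filter (· ∈ Y)).length :=
    (Finset.card_le_card hYf).trans (List.toFinset_card_le _) |>.trans' hcard
  have hf : l.filter (· ∈ Y) ≠ [] := List.ne_nil_of_length_pos (by omega)
  have hf' : l.reverse.filter (· ∈ Y) ≠ [] := by simpa [List.filter_reverse] using hf
  have hSf := Iso.of_restrict hA hAl hYI hS' (restrict_catList hf)
  have hTf := Iso.of_restrict hB hBl hYI hT' (restrict_catList hf')
  rw [List.filter_reverse] at hTf
  exact not_iso_catList_reverse (hl.filter _) hlen ((hSf.symm.trans hiso).trans hTf)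

end

theorem mast_le_of_perfect {k a b : ℕ} {S T : PTree α} (hS : Phylo S) (hT : Phylo T)
    (ha : Perfect a S) (hb : Perfect b T) (hka : k ≤ a) (hkb : k ≤ b)
    (hblocks : ∀ s t, Subtree s S → Subtree t T → Perfect k s → Perfect k t →
      mast s t ≤ 2) :
    mast S T ≤ 2 ^ (max a b - k + 1) := by
  induction hn : a + b using Nat.strong_induction_on generalizing a b S T with
  | _ n ih =>
  wlog hab : a ≤ b generalizing a b S T
  · rw [mast_comm, max_comm]
    refine this hT hS hb ha hkb hka (fun s t hs ht hsk htk => ?_) (by omega) (by omega)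
    rw [mast_comm]
    exact hblocks t s ht hs htk hsk
  have ih' {a' b' : ℕ} {S' T' : PTree α} (hS' : Subtree S' S) (hT' : Subtree T' T)
      (ha' : Perfect a' S') (hb' : Perfect b' T') (hka' : k ≤ a') (hkb' : k ≤ b')
      (hlt : a' + b' < a + b) : mast S' T' ≤ 2 ^ (max a' b' - k + 1) :=
    ih _ (hn ▸ hlt) (hS.of_subtree hS') (hT.of_subtree hT') ha' hb' hka' hkb'
      (fun s t hs ht => hblocks s t (hs.trans hS') (ht.trans hT')) rfl
  by_cases hbk : b = k
  · obtain rfl : a = b := by omega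
    subst hbk
    simpa using hblocks S T (.refl _) (.refl _) ha hb
  obtain _ | @⟨m, T₁, T₂, hT₁, hT₂⟩ := hb
  · omega
  have hkm : k ≤ m := by omega
  rcases hab.lt_or_eq with hab | rfl
  · have h₁ := ih' (.refl _) (.left (.refl _)) ha hT₁ hka hkm (by omega)
    have h₂ := ih' (.refl _) (.right (.refl _)) ha hT₂ hka hkm (by omega)
    calc mast S (node T₁ T₂) ≤ mast S T₁ + mast S T₂ := mast_le_add_node hS hT
      _ ≤ 2 ^ (max a m - k + 1) + 2 ^ (max a m - k + 1) := add_le_add h₁ h₂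
      _ = 2 ^ (max a (m + 1) - k + 1) := by rw [← two_mul, ← pow_succ']; congr 1; omega
  obtain _ | @⟨_, S₁, S₂, hS₁, hS₂⟩ := ha
  have h₁₁ := ih' (.left (.refl _)) (.left (.refl _)) hS₁ hT₁ hkm hkm (by omega)
  have h₁₂ := ih' (.left (.refl _)) (.right (.refl _)) hS₁ hT₂ hkm hkm (by omega)
  have h₂₁ := ih' (.right (.refl _)) (.left (.refl _)) hS₂ hT₁ hkm hkm (by omega)
  have h₂₂ := ih' (.right (.refl _)) (.right (.refl _)) hS₂ hT₂ hkm hkm (by omega)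
  have hpow : 2 ^ (max (m + 1) (m + 1) - k + 1) = 2 * 2 ^ (max m m - k + 1) := by
    rw [← pow_succ']; congr 1; omega
  -- each of the six terms of the recursion is bounded by a sum of two of the `hᵢⱼ`
  have := mast_node_node_le hS hT
  have := mast_le_add_node hS.left hT
  have := mast_le_add_node hS.right hT
  have := mast_node_le_add hS hT.left
  have := mast_node_le_add hS hT.right
  omega

theorem exists_eq_of_subtree_of_perfect {ι : Type*} {k : ℕ} {S s : PTree α}
    {B : ι → PTree α} (hS : Phylo S) (hB : ∀ i, Subtree (B i) S)
    (hBcard : ∀ i, (B i).leaves.card = 2 ^ k) (hcover : ∀ x ∈ S.leaves, ∃ i, x ∈ (B i).leaves)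
    (hs : Subtree s S) (hsk : Perfect k s) :
    ∃ i, s = B i := by
  obtain ⟨x, hx⟩ := List.exists_mem_of_ne_nil _ (leafList_ne_nil s)
  obtain ⟨i, hxi⟩ := hcover x (mem_leaves.mpr (hs.sublist.mem hx))
  refine ⟨i, Subtree.eq_of_length_eq hS hs (hB i) hx (mem_leaves.mp hxi) ?_⟩
  rw [hsk.length, ← hBcard i, (hS.of_subtree (hB i)).card_leaves]

end PTree
end PhyloMAST

open PhyloMAST PTree
theorem mast_le_of_antiCaterpillar_overlaps_general {α : Type} [DecidableEq α] [Inhabited α]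
    (k p q : ℕ)
    (S T : PTree α) (hS : Phylo S) (hT : Phylo T)
    (hbS : Balanced S) (hbT : Balanced T)
    (hScard : S.leaves.card = p * 2 ^ k) (hTcard : T.leaves.card = q * 2 ^ k)
    (SS : Fin p → PTree α) (TT : Fin q → PTree α)
    (hSSsub : ∀ i, Subtree (SS i) S) (hTTsub : ∀ j, Subtree (TT j) T)
    (hSScard : ∀ i, (SS i).leaves.card = 2 ^ k)
    (hTTcard : ∀ j, (TT j).leaves.card = 2 ^ k)
    (hSSunion : (Finset.univ.biUnion fun i => (SS i).leaves) = S.leaves)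
    (hTTunion : (Finset.univ.biUnion fun j => (TT j).leaves) = T.leaves)
    (hanti : ∀ i j, ∃ l : List α, l.Nodup ∧
      l.toFinset = (SS i).leaves ∩ (TT j).leaves ∧
      (∃ A, (SS i).restrict ((SS i).leaves ∩ (TT j).leaves) = some A ∧
        Iso A (catList l)) ∧
      (∃ B, (TT j).restrict ((SS i).leaves ∩ (TT j).leaves) = some B ∧
        Iso B (catList l.reverse))) :
    mast S T ≤ 2 * max p q := by
  obtain ⟨hkS, rfl⟩ :=
    eq_two_pow_sub_of_mul_two_pow_eq (hScard.symm.trans (hS.card_leaves.trans hbS))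
  obtain ⟨hkT, rfl⟩ :=
    eq_two_pow_sub_of_mul_two_pow_eq (hTcard.symm.trans (hT.card_leaves.trans hbT))
  have hblocks : ∀ s t, Subtree s S → Subtree t T → Perfect k s → Perfect k t →
      mast s t ≤ 2 := by
    intro s t hs ht hsk htk
    obtain ⟨i, rfl⟩ := exists_eq_of_subtree_of_perfect hS hSSsub hSScard
      (fun x hx => by simpa [← hSSunion] using hx) hs hsk
    obtain ⟨j, rfl⟩ := exists_eq_of_subtree_of_perfect hT hTTsub hTTcard
      (fun x hx => by simpa [← hTTunion] using hx) ht htk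
    exact AntiCaterpillars.mast_le_two (hanti i j)
  calc mast S T ≤ 2 ^ (max S.height T.height - k + 1) :=
        mast_le_of_perfect hS hT hbS.perfect hbT.perfect hkS hkT hblocks
    _ = 2 * max (2 ^ (S.height - k)) (2 ^ (T.height - k)) := by
        rw [pow_succ', ← Nat.sub_max_sub_right, (pow_right_mono₀ one_le_two).map_max]

/-- If `S` and `T` are balanced phylogenetic trees consisting
of `p` (resp. `q`) leaf-disjoint pendant subtrees of size `2 ^ k`, every pair
of which overlaps in exactly `r` labels and restricts to a pair of
anti-caterpillars, then `mast S T ≤ 2 * max p q`. -/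
theorem mast_le_of_antiCaterpillar_overlaps {α : Type} [DecidableEq α] [Inhabited α]
    (k p q r : ℕ) (hk : 0 < k) (hp : 0 < p) (hq : 0 < q) (hr : 0 < r)
    (S T : PTree α) (hS : Phylo S) (hT : Phylo T)
    (hbS : Balanced S) (hbT : Balanced T)
    (hScard : S.leaves.card = p * 2 ^ k) (hTcard : T.leaves.card = q * 2 ^ k)
    (SS : Fin p → PTree α) (TT : Fin q → PTree α)
    (hSSsub : ∀ i, Subtree (SS i) S) (hTTsub : ∀ j, Subtree (TT j) T)
    (hSScard : ∀ i, (SS i).leaves.card = 2 ^ k)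
    (hTTcard : ∀ j, (TT j).leaves.card = 2 ^ k)
    (hSSdisj : ∀ i i', i ≠ i' → Disjoint (SS i).leaves (SS i').leaves)
    (hTTdisj : ∀ j j', j ≠ j' → Disjoint (TT j).leaves (TT j').leaves)
    (hSSunion : (Finset.univ.biUnion fun i => (SS i).leaves) = S.leaves)
    (hTTunion : (Finset.univ.biUnion fun j => (TT j).leaves) = T.leaves)
    (hoverlap : ∀ i j, ((SS i).leaves ∩ (TT j).leaves).card = r)
    (hanti : ∀ i j, ∃ l : List α, l.Nodup ∧
      l.toFinset = (SS i).leaves ∩ (TT j).leaves ∧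
      (∃ A, (SS i).restrict ((SS i).leaves ∩ (TT j).leaves) = some A ∧
        Iso A (catList l)) ∧
      (∃ B, (TT j).restrict ((SS i).leaves ∩ (TT j).leaves) = some B ∧
        Iso B (catList l.reverse))) :
    mast S T ≤ 2 * max p q :=
  mast_le_of_antiCaterpillar_overlaps_general k p q S T hS hT hbS hbT hScard hTcard SS TT hSSsub
    hTTsub hSScard hTTcard hSSunion hTTunion hanti
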